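/- Every Lie derivation L on a triangular algebra 𝔄 = Tri(A, M, B) is proper relative to an enlargement: there exists a triangular algebra 𝔄⁰ containing 𝔄 as a subalgebra with the same identity, a derivation Δ : 𝔄 → 𝔄⁰, and a linear map χ : 𝔄 → Z(𝔄⁰) with χ([x,y]) = 0 for all x, y ∈ 𝔄, such that L = Δ + χ. -/

import Mathlib

set_option linter.unusedSectionVars false

open MulOpposite TrivSqZeroExt Finset

section TriDef
variable (R A B M : Type*) [CommRing R] [Ring A] [Ring B] [Algebra R A] [Algebra R B]
  [AddCommGroup M] [Module R M] [Module A M] [Module Bᵐᵒᵖ M] [SMulCommClass A Bᵐᵒᵖ M]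
  [IsScalarTower R A M] [IsScalarTower R Bᵐᵒᵖ M]

/-- left action of `A × B` on `M` through the first factor -/
instance Tri.instModuleProd : Module (A × B) M := Module.compHom M (RingHom.fst A B)

/-- right action of `A × B` on `M` through the second factor -/
instance Tri.instModuleProdOp : Module (A × B)ᵐᵒᵖ M :=
  Module.compHom M (RingHom.op (RingHom.snd A B))

instance Tri.instSMulCommClass : SMulCommClass (A × B) (A × B)ᵐᵒᵖ M :=
  ⟨fun p q m => smul_comm p.1 (op (unop q).2) m⟩

instance Tri.instTowerL : IsScalarTower R (A × B) M :=
  ⟨fun r p m => show (r • p.1) • m = r • (p.1 • m) from smul_assoc r p.1 m⟩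

instance Tri.instTowerR : IsScalarTower R (A × B)ᵐᵒᵖ M :=
  ⟨fun r q m => show (op (r • (unop q).2)) • m = r • ((op (unop q).2) • m) by
    rw [MulOpposite.op_smul]; exact smul_assoc r (op (unop q).2) m⟩

/-- The triangular algebra `Tri(A, M, B)` of matrices `[[a, m],[0, b]]`. -/
abbrev Tri : Type _ := TrivSqZeroExt (A × B) M

variable {A B M}

/-- the matrix `[[a, m],[0, b]]` -/
def Tri.mk (a : A) (m : M) (b : B) : Tri A B M := ⟨(a, b), m⟩

end TriDef

universe u v w

open Function

/-!
Write `τ : M → M` for the map `L` induces on the corner `M` and `n₀` for the `M`-component of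
`L (0 ⊕ 1_B)`. Evaluating the Lie identity on pairs of diagonal elements and on a diagonal
element against the corner shows that `L` maps `(a, m, b)` to
`(f a + f' b, τ m + n₀ b - a n₀, h a + h' b)` with `f' b ∈ Z(A)`, `h a ∈ Z(B)`, and that in
`End_R M` the commutators `[τ, a·] = (f a)· - ·(h a)` and `[τ, ·b] = ·(h' b) - (f' b)·` are
multiplications up to central terms. So take `A₀` to be the commutant in `End_R M` of all right
multiplications and of left multiplications by `Z(A)`, and `B₀` the (opposite of the) commutant
of `A₀`: they commute, contain `A` and `B`, contain both commutators, and every operator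
`z· + ·z'` with `z ∈ Z(A)`, `z' ∈ Z(B)` lies in both and is central in each. Then
`Δ (a, m, b) = ([τ, a·], τ m + n₀ b - a n₀, [τ, ·b])` is a derivation and `χ = L - Δ` takes the
central values `(c, 0, c)` with `c = (f' b)· + ·(h a)`; that `χ` kills commutators is then
formal.
-/

theorem map_lie_eq_zero_of_eq_add {S T F G : Type*} [Ring S] [Ring T] [FunLike F S T]
    [RingHomClass F S T] [FunLike G S T] [AddMonoidHomClass G S T] (ι : F) {L : S → S} {Δ : G}
    {χ : S → T} (hL : ∀ x y, L ⁅x, y⁆ = ⁅L x, y⁆ + ⁅x, L y⁆)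
    (hΔ : ∀ x y, Δ (x * y) = Δ x * ι y + ι x * Δ y) (hχ : ∀ x, χ x ∈ Subring.center T)
    (hLΔχ : ∀ x, ι (L x) = Δ x + χ x) (x y : S) : χ ⁅x, y⁆ = 0 := by
  have hcomm z w : χ z * ι w = ι w * χ z := (Subring.mem_center_iff.mp (hχ z) (ι w)).symm
  rw [← add_right_inj (Δ ⁅x, y⁆), ← hLΔχ, hL]
  simp only [Ring.lie_def, map_add, map_sub, map_mul, hLΔχ, hΔ, add_mul, mul_add, hcomm]
  abel

namespace Tri

section Structure

variable {R A B M : Type*} [CommRing R] [Ring A] [Ring B] [Algebra R A] [Algebra R B]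
  [AddCommGroup M] [Module R M] [Module A M] [Module Bᵐᵒᵖ M] [SMulCommClass A Bᵐᵒᵖ M]
  [IsScalarTower R A M] [IsScalarTower R Bᵐᵒᵖ M]

@[simp] lemma prod_smul (p : A × B) (m : M) : p • m = p.1 • m := rfl

@[simp] lemma op_prod_smul (p : (A × B)ᵐᵒᵖ) (m : M) : p • m = op (unop p).2 • m := rfl

@[simp] lemma fst_mk (a : A) (m : M) (b : B) : fst (Tri.mk a m b) = (a, b) := rfl

@[simp] lemma snd_mk (a : A) (m : M) (b : B) : snd (Tri.mk a m b) = m := rfl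

theorem mem_center_of_fst_mem_center {x : Tri A B M} (hA : (fst x).1 ∈ Set.center A)
    (hB : (fst x).2 ∈ Set.center B) (hM : ∀ m : M, (fst x).1 • m = op (fst x).2 • m)
    (hsnd : snd x = 0) : x ∈ Subring.center (Tri A B M) := by
  rw [Subring.mem_center_iff]
  intro y
  ext
  · simp [fst_mul, Semigroup.mem_center_iff.mp hA]
  · simp [fst_mul, Semigroup.mem_center_iff.mp hB]
  · simp [snd_mul, hsnd, hM]

variable (L : Tri A B M →ₗ[R] Tri A B M)

def bimodulePart : M →ₗ[R] M :=
  (sndHom (A × B) M).restrictScalars R ∘ₗ L ∘ₗ (inrHom (A × B) M).restrictScalars R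

def corner : M := snd (L (inl (0, 1)))

variable {L} (hL : ∀ x y : Tri A B M, L ⁅x, y⁆ = ⁅L x, y⁆ + ⁅x, L y⁆)
include hL

theorem fst_map_inr (m : M) : fst (L (inr m)) = 0 := by
  have h := congrArg fst (hL (inl (1, 0)) (inr m))
  simp only [Ring.lie_def, inl_mul_inr, inr_mul_inl] at h
  simpa [fst_mul, Prod.ext_iff] using h

theorem map_inr (m : M) : L (inr m) = inr (bimodulePart L m) :=
  TrivSqZeroExt.ext (fst_map_inr hL m) rfl

theorem fst_map (x : Tri A B M) :
    fst (L x) = fst (L (inl ((fst x).1, 0))) + fst (L (inl (0, (fst x).2))) := by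
  conv_lhs => rw [← inl_fst_add_inr_snd_eq x]
  rw [map_add, fst_add, fst_map_inr hL, add_zero, ← fst_add, ← map_add, ← inl_add,
    Prod.mk_add_mk, add_zero, zero_add]

theorem lie_map_inl_add_lie_inl_map (a : A) (b : B) :
    ⁅L (inl (a, 0)), (inl (0, b) : Tri A B M)⁆ + ⁅(inl (a, 0) : Tri A B M), L (inl (0, b))⁆
      = 0 := by
  rw [← hL, Ring.lie_def, ← inl_mul, ← inl_mul, ← inl_sub]
  simp

theorem fst_fst_map_inl_mem_center (b : B) : (fst (L (inl (0, b)))).1 ∈ Set.center A := by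
  refine Semigroup.mem_center_iff.mpr fun a => ?_
  have h := congrArg (fun x => (fst x).1) (lie_map_inl_add_lie_inl_map hL a b)
  simp only [Ring.lie_def, fst_add, fst_sub, fst_mul, fst_inl, Prod.fst_add, Prod.fst_sub,
    Prod.fst_mul, mul_zero, zero_mul, sub_self, zero_add, fst_zero, Prod.fst_zero] at h
  exact sub_eq_zero.mp h

theorem snd_fst_map_inl_mem_center (a : A) : (fst (L (inl (a, 0)))).2 ∈ Set.center B := by
  refine Semigroup.mem_center_iff.mpr fun b => ?_
  have h := congrArg (fun x => (fst x).2) (lie_map_inl_add_lie_inl_map hL a b)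
  simp only [Ring.lie_def, fst_add, fst_sub, fst_mul, fst_inl, Prod.snd_add, Prod.snd_sub,
    Prod.snd_mul, mul_zero, zero_mul, sub_self, add_zero, fst_zero, Prod.snd_zero] at h
  exact (sub_eq_zero.mp h).symm

theorem snd_map_inl (p : A × B) : snd (L (inl p)) = op p.2 • corner L - p.1 • corner L := by
  have h a b := congrArg snd (lie_map_inl_add_lie_inl_map hL a b)
  simp only [Ring.lie_def, snd_add, snd_sub, snd_mul, snd_inl, smul_zero, fst_inl, op_prod_smul,
    unop_op, zero_add, prod_smul, zero_smul, add_zero, sub_zero, op_zero, snd_zero] at h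
  have hA (a : A) : snd (L (inl (a, 0))) = -(a • corner L) := by
    simpa [corner] using eq_neg_of_add_eq_zero_left (h a 1)
  have hB (b : B) : snd (L (inl (0, b))) = op b • corner L := by
    simpa [hA, corner] using eq_neg_of_add_eq_zero_right (h 1 b)
  have hp : (inl p : Tri A B M) = inl (p.1, 0) + inl (0, p.2) := by simp [← inl_add]
  rw [hp, map_add, snd_add, hA, hB, sub_eq_add_neg, add_comm]

theorem snd_map (x : Tri A B M) :
    snd (L x) = bimodulePart L (snd x) + op (fst x).2 • corner L - (fst x).1 • corner L := by
  conv_lhs => rw [← inl_fst_add_inr_snd_eq x]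
  rw [map_add, snd_add, snd_map_inl hL, map_inr hL, snd_inr]
  abel

theorem bimodulePart_sub_smul (p : A × B) (m : M) :
    bimodulePart L (p.1 • m - op p.2 • m) = (fst (L (inl p))).1 • m - op (fst (L (inl p))).2 • m
      + (p.1 • bimodulePart L m - op p.2 • bimodulePart L m) := by
  have h := congrArg snd (hL (inl p) (inr m))
  simp only [Ring.lie_def, inl_mul_inr, inr_mul_inl, ← inr_sub, map_inr hL] at h
  simpa [snd_mul] using h

theorem lie_bimodulePart_lsmul (a : A) :
    ⁅bimodulePart L, Algebra.lsmul R R M a⁆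
      = Algebra.lsmul R R M (fst (L (inl (a, 0)))).1
        - Algebra.lsmul R R M (op (fst (L (inl (a, 0)))).2) := by
  ext m
  have h := bimodulePart_sub_smul hL (a, 0) m
  simp only [op_zero, zero_smul, sub_zero] at h
  simp [Ring.lie_def, h]

theorem lie_bimodulePart_lsmul_op (b : B) :
    ⁅bimodulePart L, Algebra.lsmul R R M (op b)⁆
      = Algebra.lsmul R R M (op (fst (L (inl (0, b)))).2)
        - Algebra.lsmul R R M (fst (L (inl (0, b)))).1 := by
  ext m
  have h := bimodulePart_sub_smul hL (0, b) m
  simp only [zero_smul, zero_sub, map_neg] at h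
  simp only [Ring.lie_def, LinearMap.sub_apply, Module.End.mul_apply, Algebra.lsmul_coe]
  rw [neg_eq_iff_eq_neg.mp h]
  abel

end Structure

section Map

variable {R A B A' B' M : Type*} [CommRing R] [Ring A] [Ring B] [Ring A'] [Ring B']
  [Algebra R A] [Algebra R B] [Algebra R A'] [Algebra R B'] [AddCommGroup M] [Module R M]
  [Module A M] [Module Bᵐᵒᵖ M] [Module A' M] [Module B'ᵐᵒᵖ M]
  [SMulCommClass A Bᵐᵒᵖ M] [SMulCommClass A' B'ᵐᵒᵖ M]
  [IsScalarTower R A M] [IsScalarTower R Bᵐᵒᵖ M]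
  [IsScalarTower R A' M] [IsScalarTower R B'ᵐᵒᵖ M]

def map (φA : A →ₐ[R] A') (φB : B →ₐ[R] B') (hA : ∀ (a : A) (m : M), φA a • m = a • m)
    (hB : ∀ (b : B) (m : M), op (φB b) • m = op b • m) : Tri A B M →ₐ[R] Tri A' B' M :=
  lift ((inlAlgHom R (A' × B') M).comp (φA.prodMap φB)) ((inrHom (A' × B') M).restrictScalars R)
    (fun m n => inr_mul_inr _ m n)
    (fun p m => ((inl_mul_inr (φA.prodMap φB p) m).trans (congrArg inr (hA p.1 m))).symm)
    (fun p m => ((inr_mul_inl (φA.prodMap φB p) m).trans (congrArg inr (hB p.2 m))).symm)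

theorem map_apply (φA : A →ₐ[R] A') (φB : B →ₐ[R] B') (hA : ∀ (a : A) (m : M), φA a • m = a • m)
    (hB : ∀ (b : B) (m : M), op (φB b) • m = op b • m) (x : Tri A B M) :
    map φA φB hA hB x = Tri.mk (φA (fst x).1) (snd x) (φB (fst x).2) := by
  change inl (φA (fst x).1, φB (fst x).2) + inr (snd x) = _
  ext <;> simp [Tri.mk]

end Map

section Enlargement

variable (R : Type*) (A : Type u) (B : Type v) (M : Type w) [CommRing R] [Ring A] [Ring B]
  [Algebra R A] [Algebra R B] [AddCommGroup M] [Module R M] [Module A M] [Module Bᵐᵒᵖ M]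
  [SMulCommClass A Bᵐᵒᵖ M] [IsScalarTower R A M] [IsScalarTower R Bᵐᵒᵖ M]

def leftEnd : Subalgebra R (Module.End R M) :=
  Subalgebra.centralizer R
    (Set.range (fun b : B => Algebra.lsmul R R M (op b)) ∪ Algebra.lsmul R R M '' Set.center A)

def rightEnd : Subalgebra R (Module.End R M) :=
  Subalgebra.centralizer R (leftEnd R A B M)

variable {R A B M}

theorem lsmul_mem_leftEnd (a : A) : Algebra.lsmul R R M a ∈ leftEnd R A B M := by
  rw [leftEnd, Subalgebra.mem_centralizer_iff]
  rintro g (⟨b, rfl⟩ | ⟨z, hz, rfl⟩)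
  · ext m
    exact smul_comm a (op b) m |>.symm
  · rw [← map_mul, ← map_mul, Semigroup.mem_center_iff.mp hz]

theorem lsmul_op_mem_leftEnd {z : B} (hz : z ∈ Set.center B) :
    Algebra.lsmul R R M (op z) ∈ leftEnd R A B M := by
  rw [leftEnd, Subalgebra.mem_centralizer_iff]
  rintro g (⟨b, rfl⟩ | ⟨a, -, rfl⟩)
  · rw [← map_mul, ← map_mul, ← op_mul, ← op_mul, Semigroup.mem_center_iff.mp hz]
  · ext m
    exact smul_comm a (op z) m

theorem subset_rightEnd :
    Set.range (fun b : B => Algebra.lsmul R R M (op b)) ∪ Algebra.lsmul R R M '' Set.center A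
      ⊆ rightEnd R A B M :=
  Set.subset_centralizer_centralizer

theorem lsmul_op_mem_rightEnd (b : B) : Algebra.lsmul R R M (op b) ∈ rightEnd R A B M :=
  subset_rightEnd (Or.inl ⟨b, rfl⟩)

theorem lsmul_mem_rightEnd {z : A} (hz : z ∈ Set.center A) :
    Algebra.lsmul R R M z ∈ rightEnd R A B M :=
  subset_rightEnd (Or.inr ⟨z, hz, rfl⟩)

theorem commute_of_mem_leftEnd_of_mem_rightEnd {f g : Module.End R M}
    (hf : f ∈ leftEnd R A B M) (hg : g ∈ rightEnd R A B M) : Commute f g :=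
  (Subalgebra.mem_centralizer_iff R).mp hg f hf

variable (R A B M)

def LeftEnlargement : Type (max u v w) := ULift.{max u v} (leftEnd R A B M)

def RightEnlargement : Type (max u v w) := ULift.{max u v} (rightEnd R A B M)ᵐᵒᵖ

instance : Ring (LeftEnlargement R A B M) := inferInstanceAs (Ring (ULift _))

instance : Algebra R (LeftEnlargement R A B M) := inferInstanceAs (Algebra R (ULift _))

instance : Ring (RightEnlargement R A B M) := inferInstanceAs (Ring (ULift _))

instance : Algebra R (RightEnlargement R A B M) := inferInstanceAs (Algebra R (ULift _))

def LeftEnlargement.toEnd : LeftEnlargement R A B M →ₐ[R] Module.End R M :=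
  (leftEnd R A B M).val.comp ULift.algEquiv.toAlgHom

def RightEnlargement.opToEnd : (RightEnlargement R A B M)ᵐᵒᵖ →ₐ[R] Module.End R M :=
  (rightEnd R A B M).val.comp
    ((AlgEquiv.opOp R _).symm.toAlgHom.comp (AlgHom.op ULift.algEquiv.toAlgHom))

theorem LeftEnlargement.toEnd_injective : Injective (LeftEnlargement.toEnd R A B M) :=
  Subtype.val_injective.comp ULift.down_injective

theorem RightEnlargement.opToEnd_injective : Injective (RightEnlargement.opToEnd R A B M) :=
  Subtype.val_injective.comp (unop_injective.comp (ULift.down_injective.comp unop_injective))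

theorem LeftEnlargement.toEnd_mem (x : LeftEnlargement R A B M) :
    LeftEnlargement.toEnd R A B M x ∈ leftEnd R A B M :=
  x.down.2

theorem RightEnlargement.opToEnd_mem (y : (RightEnlargement R A B M)ᵐᵒᵖ) :
    RightEnlargement.opToEnd R A B M y ∈ rightEnd R A B M :=
  (unop (unop y).down).2

instance : Module (LeftEnlargement R A B M) M :=
  Module.compHom M (LeftEnlargement.toEnd R A B M).toRingHom

instance : Module (RightEnlargement R A B M)ᵐᵒᵖ M :=
  Module.compHom M (RightEnlargement.opToEnd R A B M).toRingHom

variable {R A B M}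

theorem LeftEnlargement.smul_def (x : LeftEnlargement R A B M) (m : M) :
    x • m = LeftEnlargement.toEnd R A B M x m :=
  rfl

theorem RightEnlargement.smul_def (y : (RightEnlargement R A B M)ᵐᵒᵖ) (m : M) :
    y • m = RightEnlargement.opToEnd R A B M y m :=
  rfl

instance : SMulCommClass (LeftEnlargement R A B M) (RightEnlargement R A B M)ᵐᵒᵖ M where
  smul_comm x y m := by
    simp only [LeftEnlargement.smul_def, RightEnlargement.smul_def, ← Module.End.mul_apply,
      (commute_of_mem_leftEnd_of_mem_rightEnd (LeftEnlargement.toEnd_mem R A B M x)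
        (RightEnlargement.opToEnd_mem R A B M y)).eq]

instance : IsScalarTower R (LeftEnlargement R A B M) M where
  smul_assoc r x m := by simp [LeftEnlargement.smul_def]

instance : IsScalarTower R (RightEnlargement R A B M)ᵐᵒᵖ M where
  smul_assoc r y m := by simp [RightEnlargement.smul_def]

def LeftEnlargement.mk (f : Module.End R M) (hf : f ∈ leftEnd R A B M) :
    LeftEnlargement R A B M :=
  ULift.up ⟨f, hf⟩

def RightEnlargement.mk (g : Module.End R M) (hg : g ∈ rightEnd R A B M) :
    RightEnlargement R A B M :=
  ULift.up (op ⟨g, hg⟩)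

@[simp] theorem LeftEnlargement.toEnd_mk (f : Module.End R M) (hf : f ∈ leftEnd R A B M) :
    LeftEnlargement.toEnd R A B M (LeftEnlargement.mk f hf) = f :=
  rfl

@[simp] theorem RightEnlargement.opToEnd_op_mk (g : Module.End R M) (hg : g ∈ rightEnd R A B M) :
    RightEnlargement.opToEnd R A B M (op (RightEnlargement.mk g hg)) = g :=
  rfl

theorem enlargement_ext {x y : Tri (LeftEnlargement R A B M) (RightEnlargement R A B M) M}
    (hA : LeftEnlargement.toEnd R A B M (fst x).1 = LeftEnlargement.toEnd R A B M (fst y).1)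
    (hB : RightEnlargement.opToEnd R A B M (op (fst x).2)
      = RightEnlargement.opToEnd R A B M (op (fst y).2))
    (hM : snd x = snd y) : x = y :=
  TrivSqZeroExt.ext (Prod.ext (LeftEnlargement.toEnd_injective R A B M hA)
    (op_injective (RightEnlargement.opToEnd_injective R A B M hB))) hM

variable (R B M) in
def LeftEnlargement.ofA : A →ₐ[R] LeftEnlargement R A B M :=
  ULift.algEquiv.symm.toAlgHom.comp ((Algebra.lsmul R R M).codRestrict _ lsmul_mem_leftEnd)

variable (R A M) in
def RightEnlargement.ofB : B →ₐ[R] RightEnlargement R A B M :=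
  ULift.algEquiv.symm.toAlgHom.comp <|
    (AlgHom.op ((Algebra.lsmul R R M).codRestrict _ fun b => lsmul_op_mem_rightEnd (unop b))).comp
      (AlgEquiv.opOp R B).toAlgHom

theorem LeftEnlargement.ofA_smul (a : A) (m : M) : LeftEnlargement.ofA R B M a • m = a • m :=
  rfl

theorem RightEnlargement.ofB_smul (b : B) (m : M) :
    op (RightEnlargement.ofB R A M b) • m = op b • m :=
  rfl

theorem LeftEnlargement.ofA_injective (faithA : ∀ a : A, (∀ m : M, a • m = 0) → a = 0) :
    Injective (LeftEnlargement.ofA R B M (A := A)) :=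
  (injective_iff_map_eq_zero _).mpr fun a ha =>
    faithA a fun m => by rw [← LeftEnlargement.ofA_smul (R := R) (B := B), ha, zero_smul]

theorem RightEnlargement.ofB_injective (faithB : ∀ b : B, (∀ m : M, op b • m = 0) → b = 0) :
    Injective (RightEnlargement.ofB R A M (B := B)) :=
  (injective_iff_map_eq_zero _).mpr fun b hb =>
    faithB b fun m => by
      rw [← RightEnlargement.ofB_smul (R := R) (A := A), hb, op_zero, zero_smul]

theorem LeftEnlargement.eq_zero_of_smul_eq_zero (x : LeftEnlargement R A B M)
    (hx : ∀ m : M, x • m = 0) : x = 0 :=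
  LeftEnlargement.toEnd_injective R A B M <| by
    ext m
    simpa [LeftEnlargement.smul_def] using hx m

theorem RightEnlargement.eq_zero_of_smul_eq_zero (y : RightEnlargement R A B M)
    (hy : ∀ m : M, op y • m = 0) : y = 0 :=
  op_injective <| RightEnlargement.opToEnd_injective R A B M <| by
    ext m
    simpa [RightEnlargement.smul_def] using hy m

theorem LeftEnlargement.mem_center {x : LeftEnlargement R A B M}
    (hx : LeftEnlargement.toEnd R A B M x ∈ rightEnd R A B M) : x ∈ Set.center _ :=
  Semigroup.mem_center_iff.mpr fun g => LeftEnlargement.toEnd_injective R A B M <| by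
    simpa only [map_mul] using
      (commute_of_mem_leftEnd_of_mem_rightEnd (LeftEnlargement.toEnd_mem R A B M g) hx).eq

theorem RightEnlargement.mem_center {y : RightEnlargement R A B M}
    (hy : RightEnlargement.opToEnd R A B M (op y) ∈ leftEnd R A B M) : y ∈ Set.center _ :=
  Semigroup.mem_center_iff.mpr fun g => op_injective <|
    RightEnlargement.opToEnd_injective R A B M <| by
      simpa only [op_mul, map_mul] using
        (commute_of_mem_leftEnd_of_mem_rightEnd hy
          (RightEnlargement.opToEnd_mem R A B M (op g))).eq

variable (R A B M) in
def toEnlargement : Tri A B M →ₐ[R] Tri (LeftEnlargement R A B M) (RightEnlargement R A B M) M :=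
  map (LeftEnlargement.ofA R B M) (RightEnlargement.ofB R A M) LeftEnlargement.ofA_smul
    RightEnlargement.ofB_smul

theorem toEnlargement_apply (x : Tri A B M) :
    toEnlargement R A B M x = Tri.mk (LeftEnlargement.ofA R B M (fst x).1) (snd x)
      (RightEnlargement.ofB R A M (fst x).2) :=
  map_apply ..

@[simp] theorem toEnd_fst_toEnlargement (x : Tri A B M) :
    LeftEnlargement.toEnd R A B M (fst (toEnlargement R A B M x)).1
      = Algebra.lsmul R R M (fst x).1 := by
  rw [toEnlargement_apply]; rfl

@[simp] theorem opToEnd_snd_toEnlargement (x : Tri A B M) :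
    RightEnlargement.opToEnd R A B M (op (fst (toEnlargement R A B M x)).2)
      = Algebra.lsmul R R M (op (fst x).2) := by
  rw [toEnlargement_apply]; rfl

@[simp] theorem snd_toEnlargement (x : Tri A B M) : snd (toEnlargement R A B M x) = snd x := by
  rw [toEnlargement_apply]; rfl

end Enlargement

section Decomposition

variable {R : Type*} {A : Type u} {B : Type v} {M : Type w} [CommRing R] [Ring A] [Ring B]
  [Algebra R A] [Algebra R B] [AddCommGroup M] [Module R M] [Module A M] [Module Bᵐᵒᵖ M]
  [SMulCommClass A Bᵐᵒᵖ M] [IsScalarTower R A M] [IsScalarTower R Bᵐᵒᵖ M]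
  {L : Tri A B M →ₗ[R] Tri A B M} (hL : ∀ x y : Tri A B M, L ⁅x, y⁆ = ⁅L x, y⁆ + ⁅x, L y⁆)
include hL

theorem lie_bimodulePart_lsmul_mem_leftEnd (a : A) :
    ⁅bimodulePart L, Algebra.lsmul R R M a⁆ ∈ leftEnd R A B M := by
  rw [lie_bimodulePart_lsmul hL]
  exact sub_mem (lsmul_mem_leftEnd _) (lsmul_op_mem_leftEnd (snd_fst_map_inl_mem_center hL a))

theorem lie_bimodulePart_lsmul_op_mem_rightEnd (b : B) :
    ⁅bimodulePart L, Algebra.lsmul R R M (op b)⁆ ∈ rightEnd R A B M := by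
  rw [lie_bimodulePart_lsmul_op hL]
  exact sub_mem (lsmul_op_mem_rightEnd _) (lsmul_mem_rightEnd (fst_fst_map_inl_mem_center hL b))

def derivationPart :
    Tri A B M →ₗ[R] Tri (LeftEnlargement R A B M) (RightEnlargement R A B M) M where
  toFun x := Tri.mk
    (LeftEnlargement.mk _ (lie_bimodulePart_lsmul_mem_leftEnd hL (fst x).1))
    (bimodulePart L (snd x) + op (fst x).2 • corner L - (fst x).1 • corner L)
    (RightEnlargement.mk _ (lie_bimodulePart_lsmul_op_mem_rightEnd hL (fst x).2))
  map_add' x y := by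
    refine enlargement_ext ?_ ?_ ?_
    · simp only [fst_add, Prod.fst_add, fst_mk, map_add, LeftEnlargement.toEnd_mk, Ring.lie_def]
      noncomm_ring
    · simp only [fst_add, Prod.snd_add, fst_mk, op_add, map_add, RightEnlargement.opToEnd_op_mk,
        Ring.lie_def]
      noncomm_ring
    · simp only [fst_add, Prod.fst_add, map_add, snd_add, Prod.snd_add, op_add, add_smul, snd_mk]
      abel
  map_smul' r x := by
    refine enlargement_ext ?_ ?_ ?_
    · simp [Ring.lie_def, smul_sub]
    · simp [Ring.lie_def, smul_sub]
    · simp [smul_sub, smul_add]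

theorem derivationPart_mul (x y : Tri A B M) :
    derivationPart hL (x * y) = derivationPart hL x * toEnlargement R A B M y
      + toEnlargement R A B M x * derivationPart hL y := by
  refine enlargement_ext ?_ ?_ ?_
  · simp only [derivationPart, LinearMap.coe_mk, AddHom.coe_mk, fst_mk, fst_add, fst_mul,
      Prod.fst_add, Prod.fst_mul, map_add, map_mul, LeftEnlargement.toEnd_mk,
      toEnd_fst_toEnlargement, Ring.lie_def]
    noncomm_ring
  · simp only [derivationPart, LinearMap.coe_mk, AddHom.coe_mk, fst_mk, fst_add, fst_mul,
      Prod.snd_add, Prod.snd_mul, op_add, op_mul, map_add, map_mul,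
      RightEnlargement.opToEnd_op_mk, opToEnd_snd_toEnlargement, Ring.lie_def]
    noncomm_ring
  · simp only [derivationPart, LinearMap.coe_mk, AddHom.coe_mk, snd_mk, fst_mk, snd_add,
      snd_mul, fst_mul, Prod.fst_mul, Prod.snd_mul, prod_smul, op_prod_smul, unop_op,
      LeftEnlargement.smul_def, RightEnlargement.smul_def, LeftEnlargement.toEnd_mk,
      RightEnlargement.opToEnd_op_mk, toEnd_fst_toEnlargement, opToEnd_snd_toEnlargement,
      snd_toEnlargement, map_add, Ring.lie_def, LinearMap.sub_apply, Module.End.mul_apply,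
      Algebra.lsmul_coe, op_mul, mul_smul, smul_add, smul_sub]
    rw [smul_comm (fst x).1 (op (fst y).2)]
    abel

def centralPart :
    Tri A B M →ₗ[R] Tri (LeftEnlargement R A B M) (RightEnlargement R A B M) M :=
  (toEnlargement R A B M).toLinearMap ∘ₗ L - derivationPart hL

theorem toEnlargement_map_eq_add (x : Tri A B M) :
    toEnlargement R A B M (L x) = derivationPart hL x + centralPart hL x := by
  simp [centralPart]

theorem toEnd_fst_centralPart (x : Tri A B M) :
    LeftEnlargement.toEnd R A B M (fst (centralPart hL x)).1
      = Algebra.lsmul R R M (fst (L (inl (0, (fst x).2)))).1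
        + Algebra.lsmul R R M (op (fst (L (inl ((fst x).1, 0)))).2) := by
  simp only [centralPart, derivationPart, LinearMap.sub_apply, LinearMap.coe_comp,
    LinearMap.coe_mk, AddHom.coe_mk, comp_apply, AlgHom.toLinearMap_apply, fst_sub, fst_mk,
    Prod.fst_sub, map_sub, toEnd_fst_toEnlargement, LeftEnlargement.toEnd_mk,
    lie_bimodulePart_lsmul hL]
  rw [fst_map hL x, Prod.fst_add, map_add]
  abel

theorem opToEnd_snd_centralPart (x : Tri A B M) :
    RightEnlargement.opToEnd R A B M (op (fst (centralPart hL x)).2)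
      = Algebra.lsmul R R M (fst (L (inl (0, (fst x).2)))).1
        + Algebra.lsmul R R M (op (fst (L (inl ((fst x).1, 0)))).2) := by
  simp only [centralPart, derivationPart, LinearMap.sub_apply, LinearMap.coe_comp,
    LinearMap.coe_mk, AddHom.coe_mk, comp_apply, AlgHom.toLinearMap_apply, fst_sub, fst_mk,
    Prod.snd_sub, op_sub, map_sub, opToEnd_snd_toEnlargement, RightEnlargement.opToEnd_op_mk,
    lie_bimodulePart_lsmul_op hL]
  rw [fst_map hL x, Prod.snd_add, op_add, map_add]
  abel

theorem snd_centralPart (x : Tri A B M) : snd (centralPart hL x) = 0 := by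
  simp [centralPart, derivationPart, snd_map hL]

theorem centralPart_mem_center (x : Tri A B M) :
    centralPart hL x
      ∈ Subring.center (Tri (LeftEnlargement R A B M) (RightEnlargement R A B M) M) := by
  have hF := fst_fst_map_inl_mem_center hL (fst x).2
  have hH := snd_fst_map_inl_mem_center hL (fst x).1
  refine mem_center_of_fst_mem_center ?_ ?_ (fun m => ?_) (snd_centralPart hL x)
  · refine LeftEnlargement.mem_center ?_
    rw [toEnd_fst_centralPart hL]
    exact add_mem (lsmul_mem_rightEnd hF) (lsmul_op_mem_rightEnd _)
  · refine RightEnlargement.mem_center ?_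
    rw [opToEnd_snd_centralPart hL]
    exact add_mem (lsmul_mem_leftEnd _) (lsmul_op_mem_leftEnd hH)
  · rw [LeftEnlargement.smul_def, RightEnlargement.smul_def, toEnd_fst_centralPart hL,
      opToEnd_snd_centralPart hL]

end Decomposition

end Tri

/-- Every Lie derivation on a triangular algebra `𝔄 = Tri(A, M, B)` is proper
relative to an enlargement: there is a triangular algebra `𝔄⁰ = Tri(A₀, M, B₀)`
containing `𝔄` as a subalgebra with the same identity, a derivation
`Δ : 𝔄 → 𝔄⁰` and a central-valued linear map `χ` vanishing on commutators
such that `L = Δ + χ`. -/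
theorem lie_derivation_proper
    (R : Type*) (A : Type u) (B : Type v) (M : Type w)
    [CommRing R] [Ring A] [Ring B] [Algebra R A] [Algebra R B]
    [AddCommGroup M] [Module R M] [Module A M] [Module Bᵐᵒᵖ M] [SMulCommClass A Bᵐᵒᵖ M]
    [IsScalarTower R A M] [IsScalarTower R Bᵐᵒᵖ M]
    (faithA : ∀ a : A, (∀ m : M, a • m = 0) → a = 0)
    (faithB : ∀ b : B, (∀ m : M, op b • m = 0) → b = 0)
    (L : Tri A B M →ₗ[R] Tri A B M)
    (hLlie : ∀ x y : Tri A B M,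
      L (x * y - y * x) = (L x * y - y * L x) + (x * L y - L y * x)) :
    ∃ (A₀ B₀ : Type (max u v w)) (iA : Ring A₀) (iB : Ring B₀),
      letI := iA; letI := iB;
      ∃ (aA : Algebra R A₀) (aB : Algebra R B₀), letI := aA; letI := aB;
      ∃ (mA : Module A₀ M) (mB : Module B₀ᵐᵒᵖ M), letI := mA; letI := mB;
      ∃ (sc : SMulCommClass A₀ B₀ᵐᵒᵖ M) (tA : IsScalarTower R A₀ M)
        (tB : IsScalarTower R B₀ᵐᵒᵖ M), letI := sc; letI := tA; letI := tB;
      ∃ (φA : A →ₐ[R] A₀) (φB : B →ₐ[R] B₀),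
        Injective φA ∧ Injective φB ∧
        (∀ (a : A) (m : M), φA a • m = a • m) ∧
        (∀ (b : B) (m : M), op (φB b) • m = op b • m) ∧
        (∀ x : A₀, (∀ m : M, x • m = 0) → x = 0) ∧
        (∀ y : B₀, (∀ m : M, op y • m = 0) → y = 0) ∧
        ∃ Δ χ : Tri A B M →ₗ[R] Tri A₀ B₀ M,
          -- Δ is a derivation
          (∀ x y : Tri A B M,
            Δ (x * y) = Δ x * Tri.mk (φA (fst y).1) (snd y) (φB (fst y).2)
              + Tri.mk (φA (fst x).1) (snd x) (φB (fst x).2) * Δ y) ∧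
          -- χ is central-valued and kills commutators
          (∀ x : Tri A B M, χ x ∈ Subring.center (Tri A₀ B₀ M)) ∧
          (∀ x y : Tri A B M, χ (x * y - y * x) = 0) ∧
          -- L = Δ + χ (inside 𝔄⁰)
          (∀ x : Tri A B M,
            Tri.mk (φA (fst (L x)).1) (snd (L x)) (φB (fst (L x)).2) = Δ x + χ x) := by
  have hL : ∀ x y : Tri A B M, L ⁅x, y⁆ = ⁅L x, y⁆ + ⁅x, L y⁆ := by
    simpa only [Ring.lie_def] using hLlie
  refine ⟨Tri.LeftEnlargement R A B M, Tri.RightEnlargement R A B M, inferInstance,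
    inferInstance, inferInstance, inferInstance, inferInstance, inferInstance, inferInstance,
    inferInstance, inferInstance, Tri.LeftEnlargement.ofA R B M, Tri.RightEnlargement.ofB R A M,
    Tri.LeftEnlargement.ofA_injective faithA, Tri.RightEnlargement.ofB_injective faithB,
    Tri.LeftEnlargement.ofA_smul, Tri.RightEnlargement.ofB_smul,
    Tri.LeftEnlargement.eq_zero_of_smul_eq_zero, Tri.RightEnlargement.eq_zero_of_smul_eq_zero,
    Tri.derivationPart hL, Tri.centralPart hL, fun x y => ?_, Tri.centralPart_mem_center hL,
    fun x y => ?_, fun x => ?_⟩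
  · simpa only [Tri.toEnlargement_apply] using Tri.derivationPart_mul hL x y
  · simpa only [Ring.lie_def] using
      map_lie_eq_zero_of_eq_add (Tri.toEnlargement R A B M) hL
        (Tri.derivationPart_mul hL) (Tri.centralPart_mem_center hL)
        (Tri.toEnlargement_map_eq_add hL) x y
  · simpa only [Tri.toEnlargement_apply] using Tri.toEnlargement_map_eq_add hL x
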